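/- For any leaf ν of the search tree, Aut(G,π₀) = { R(G,π₀,ν') R(G,π₀,ν)⁻¹ : ν' is a leaf of 𝒯(G,π₀) with φ(G,π₀,ν') = φ(G,π₀,ν) }. -/

import Mathlib

/-- Relabelling action of a permutation on a graph: `v^g` adjacent to `w^g` iff `v` adjacent `w`. -/
def gactG {n : ℕ} (g : Equiv.Perm (Fin n)) (G : SimpleGraph (Fin n)) : SimpleGraph (Fin n) where
  Adj v w := G.Adj (g⁻¹ v) (g⁻¹ w)
  symm := ⟨fun _ _ h => G.adj_symm h⟩
  loopless := ⟨fun _ h => G.irrefl h⟩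

/-- Relabelling action of a permutation on a colouring. -/
def gactC {n : ℕ} (g : Equiv.Perm (Fin n)) (π : Fin n → ℕ) : Fin n → ℕ :=
  fun v => π (g⁻¹ v)

/-- A colouring of `V`: a function surjective onto `{1,…,k}` for some `k`. -/
def IsCol {n : ℕ} (π : Fin n → ℕ) : Prop := ∃ k, Set.range π = Set.Icc 1 k

/-- `π'` is finer than or equal to `π`. -/
def FinerC {n : ℕ} (π' π : Fin n → ℕ) : Prop := ∀ v w, π v < π w → π' v < π' w

/-- Nodes of the search tree with child rule given by the target cells `Tc`. -/
inductive IsTNode {n : ℕ} (Tc : List (Fin n) → Set (Fin n)) : List (Fin n) → Prop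
  | root : IsTNode Tc []
  | child {ν : List (Fin n)} {w : Fin n} :
      IsTNode Tc ν → w ∈ Tc ν → IsTNode Tc (ν ++ [w])

/-- The labelled graph `G^π` for a (discrete) colouring `π`, as a set of labelled edges. -/
def relabelSet {n : ℕ} (G : SimpleGraph (Fin n)) (π : Fin n → ℕ) : Set (ℕ × ℕ) :=
  {p | ∃ v w, G.Adj v w ∧ π v = p.1 ∧ π w = p.2}

/-- Equitable colouring: same-coloured vertices have equally many neighbours of each colour. -/
def IsEquit {n : ℕ} (G : SimpleGraph (Fin n)) (π : Fin n → ℕ) : Prop :=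
  ∀ v w, π v = π w → ∀ j,
    {u | G.Adj v u ∧ π u = j}.ncard = {u | G.Adj w u ∧ π u = j}.ncard


/-!
If `g` is an automorphism of `(G, π₀)`, equivariance of `R`, `T` and `φ` makes `ν^g` a leaf with
the same invariant, and `R(ν^g) = R(ν)^g`. Conversely, if `ν'` is a leaf with `φ(ν') = φ(ν)` and
`R(ν') = R(ν)^g`, then `G^{R(ν)} = G^{R(ν')} = (G^g)^{R(ν)}`, and a discrete labelling determines the
graph, so `G^g = G`. Moreover a discrete colouring onto `{1, …, n}` finer than `π₀` must give the
vertices of each cell of `π₀` a block of consecutive labels, in the order of the cells; hence two such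
colourings can only share a label between vertices of the same `π₀`-cell, so `π₀^g = π₀`.
-/

open Finset

section Relabelling

variable {n : ℕ}

lemma eq_gactC_iff {g : Equiv.Perm (Fin n)} {σ τ : Fin n → ℕ} :
    τ = gactC g σ ↔ ∀ v, τ (g v) = σ v := by
  refine ⟨fun h v => by simp [h, gactC], fun h => funext fun v => ?_⟩
  simpa [gactC] using h (g⁻¹ v)

lemma relabelSet_gact (g : Equiv.Perm (Fin n)) (G : SimpleGraph (Fin n)) (σ : Fin n → ℕ) :
    relabelSet (gactG g G) (gactC g σ) = relabelSet G σ := by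
  ext p
  constructor
  · rintro ⟨v, w, hadj, hv, hw⟩
    exact ⟨g⁻¹ v, g⁻¹ w, hadj, hv, hw⟩
  · rintro ⟨v, w, hadj, hv, hw⟩
    exact ⟨g v, g w, by simpa [gactG] using hadj, by simpa [gactC] using hv,
      by simpa [gactC] using hw⟩

lemma SimpleGraph.eq_of_relabelSet_eq {G H : SimpleGraph (Fin n)} {σ : Fin n → ℕ}
    (hσ : Function.Injective σ) (h : relabelSet G σ = relabelSet H σ) : G = H := by
  have key : ∀ {G H : SimpleGraph (Fin n)}, relabelSet G σ = relabelSet H σ →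
      ∀ {v w}, G.Adj v w → H.Adj v w := by
    intro G H h v w hadj
    obtain ⟨v', w', hadj', hv, hw⟩ : (σ v, σ w) ∈ relabelSet H σ := h ▸ ⟨v, w, hadj, rfl, rfl⟩
    rwa [hσ hv, hσ hw] at hadj'
  ext v w
  exact ⟨key h, key h.symm⟩

end Relabelling

section DiscreteColouring

variable {n : ℕ} {π ρ σ τ : Fin n → ℕ}

lemma IsCol.card_filter_le_eq (hcol : IsCol σ) (hinj : Function.Injective σ) (v : Fin n) :
    #{u | σ u ≤ σ v} = σ v := by
  obtain ⟨k, hk⟩ := hcol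
  have himg : univ.image σ = Icc 1 k := by
    apply coe_injective
    simp [hk]
  have hv : σ v ∈ Icc 1 k := himg ▸ mem_image_of_mem σ (mem_univ v)
  have hlabels : (univ.filter fun u => σ u ≤ σ v).image σ = Icc 1 (σ v) := by
    rw [← filter_image (p := (· ≤ σ v)), himg]
    ext m
    simp only [mem_filter, mem_Icc] at hv ⊢
    omega
  simpa [card_image_of_injective _ hinj] using congrArg card hlabels

lemma FinerC.card_filter_lt_lt (hf : FinerC ρ π) (hcol : IsCol ρ) (hinj : Function.Injective ρ)
    (x : Fin n) : #{u | π u < π x} < ρ x := by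
  rw [← hcol.card_filter_le_eq hinj x]
  calc #{u | π u < π x} ≤ #((univ.filter fun u => ρ u ≤ ρ x).erase x) := by
        refine card_le_card fun u hu => ?_
        have hlt := hf u x (mem_filter.mp hu).2
        simp only [mem_erase, mem_filter, mem_univ, true_and]
        exact ⟨fun hux => by simp [hux] at hlt, hlt.le⟩
    _ < #{u | ρ u ≤ ρ x} := card_erase_lt_of_mem (by simp)

lemma FinerC.le_card_filter_le (hf : FinerC ρ π) (hcol : IsCol ρ) (hinj : Function.Injective ρ)
    (x : Fin n) : ρ x ≤ #{u | π u ≤ π x} := by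
  rw [← hcol.card_filter_le_eq hinj x]
  refine card_le_card fun u hu => ?_
  simp only [mem_filter, mem_univ, true_and] at hu ⊢
  exact not_lt.mp fun hlt => (hf x u hlt).not_ge hu

lemma FinerC.apply_lt_apply_of_lt (hσ : FinerC σ π) (hσc : IsCol σ) (hσi : Function.Injective σ)
    (hτ : FinerC τ π) (hτc : IsCol τ) (hτi : Function.Injective τ) {v w : Fin n}
    (h : π v < π w) : σ v < τ w :=
  calc σ v ≤ #{u | π u ≤ π v} := hσ.le_card_filter_le hσc hσi v
    _ ≤ #{u | π u < π w} := card_le_card fun u hu => by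
        simp only [mem_filter, mem_univ, true_and] at hu ⊢
        exact hu.trans_lt h
    _ < τ w := hτ.card_filter_lt_lt hτc hτi w

lemma FinerC.eq_of_apply_eq (hσ : FinerC σ π) (hσc : IsCol σ) (hσi : Function.Injective σ)
    (hτ : FinerC τ π) (hτc : IsCol τ) (hτi : Function.Injective τ) {v w : Fin n}
    (h : σ v = τ w) : π v = π w := by
  rcases lt_trichotomy (π v) (π w) with hlt | heq | hgt
  · exact absurd h (hσ.apply_lt_apply_of_lt hσc hσi hτ hτc hτi hlt).ne
  · exact heq
  · exact absurd h.symm (hτ.apply_lt_apply_of_lt hτc hτi hσ hσc hσi hgt).ne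

end DiscreteColouring

lemma IsTNode.map {n : ℕ} {T : SimpleGraph (Fin n) → (Fin n → ℕ) → List (Fin n) → Set (Fin n)}
    (hT : ∀ G π ν (g : Equiv.Perm (Fin n)),
      T (gactG g G) (gactC g π) (ν.map g) = g '' (T G π ν))
    {G : SimpleGraph (Fin n)} {π : Fin n → ℕ} (g : Equiv.Perm (Fin n)) {ν : List (Fin n)}
    (hν : IsTNode (T G π) ν) : IsTNode (T (gactG g G) (gactC g π)) (ν.map g) := by
  induction hν with
  | root => exact .root
  | @child μ w _ hw ih =>
    rw [List.map_append, List.map_singleton]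
    exact ih.child (hT G π μ g ▸ Set.mem_image_of_mem g hw)

theorem stmt11_general {n : ℕ} {Ω : Type*}
    (R : SimpleGraph (Fin n) → (Fin n → ℕ) → List (Fin n) → (Fin n → ℕ))
    (T : SimpleGraph (Fin n) → (Fin n → ℕ) → List (Fin n) → Set (Fin n))
    (hR1 : ∀ G π ν, FinerC (R G π ν) π)
    (hR3 : ∀ G π ν (g : Equiv.Perm (Fin n)),
      R (gactG g G) (gactC g π) (ν.map g) = gactC g (R G π ν))
    (hT3 : ∀ G π ν (g : Equiv.Perm (Fin n)),
      T (gactG g G) (gactC g π) (ν.map g) = g '' (T G π ν))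
    (φ : SimpleGraph (Fin n) → (Fin n → ℕ) → List (Fin n) → Ω)
    (hφ2 : ∀ (G : SimpleGraph (Fin n)) (π₀ : Fin n → ℕ) (ν ν' : List (Fin n)),
      IsTNode (T G π₀) ν → IsTNode (T G π₀) ν' →
      Function.Injective (R G π₀ ν) → Function.Injective (R G π₀ ν') →
      (φ G π₀ ν = φ G π₀ ν' ↔ relabelSet G (R G π₀ ν) = relabelSet G (R G π₀ ν')))
    (hφ3 : ∀ (G : SimpleGraph (Fin n)) (π₀ : Fin n → ℕ) (ν : List (Fin n))
      (g : Equiv.Perm (Fin n)), φ (gactG g G) (gactC g π₀) (ν.map g) = φ G π₀ ν)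
    (hRcol : ∀ G π ν, IsCol (R G π ν))
    (G : SimpleGraph (Fin n)) (π₀ : Fin n → ℕ)
    (ν : List (Fin n)) (hν : IsTNode (T G π₀) ν)
    (hd : Function.Injective (R G π₀ ν)) :
    ∀ g : Equiv.Perm (Fin n),
      (gactG g G = G ∧ gactC g π₀ = π₀) ↔
      ∃ ν' : List (Fin n), IsTNode (T G π₀) ν' ∧ Function.Injective (R G π₀ ν') ∧
        φ G π₀ ν' = φ G π₀ ν ∧ ∀ v, R G π₀ ν' (g v) = R G π₀ ν v := by
  intro g
  constructor
  · rintro ⟨hG, hπ⟩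
    have hnode := hν.map hT3 g
    have hRg := hR3 G π₀ ν g
    have hφg := hφ3 G π₀ ν g
    rw [hG, hπ] at hnode hRg hφg
    exact ⟨ν.map g, hnode, hRg ▸ hd.comp g⁻¹.injective, hφg, eq_gactC_iff.mp hRg⟩
  · rintro ⟨ν', hν', hinj', hφeq, hRν'⟩
    have hRg : R G π₀ ν' = gactC g (R G π₀ ν) := eq_gactC_iff.mpr hRν'
    have hrel := (hφ2 G π₀ ν ν' hν hν' hd hinj').mp hφeq.symm
    refine ⟨SimpleGraph.eq_of_relabelSet_eq hinj' ?_, funext fun v => ?_⟩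
    · rw [hRg, relabelSet_gact, hrel, hRg]
    · exact ((hR1 G π₀ ν').eq_of_apply_eq (hRcol G π₀ ν') hinj' (hR1 G π₀ ν) (hRcol G π₀ ν) hd
        (congrFun hRg v)).symm

/-- Aut(G,π₀) = { R(ν')R(ν)⁻¹ : ν' a leaf with φ(ν') = φ(ν) }. -/
theorem stmt11 {n : ℕ} {Ω : Type*} [LinearOrder Ω]
    (R : SimpleGraph (Fin n) → (Fin n → ℕ) → List (Fin n) → (Fin n → ℕ))
    (T : SimpleGraph (Fin n) → (Fin n → ℕ) → List (Fin n) → Set (Fin n))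
    (hR1 : ∀ G π ν, FinerC (R G π ν) π)
    (hR2 : ∀ G π ν, ∀ v ∈ ν, (R G π ν) ⁻¹' {R G π ν v} = {v})
    (hR3 : ∀ G π ν (g : Equiv.Perm (Fin n)),
      R (gactG g G) (gactC g π) (ν.map g) = gactC g (R G π ν))
    (hT1 : ∀ G π ν, Function.Injective (R G π ν) → T G π ν = ∅)
    (hT2 : ∀ G π ν, ¬ Function.Injective (R G π ν) →
      ∃ j, T G π ν = (R G π ν) ⁻¹' {j} ∧ ∃ v w, v ∈ T G π ν ∧ w ∈ T G π ν ∧ v ≠ w)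
    (hT3 : ∀ G π ν (g : Equiv.Perm (Fin n)),
      T (gactG g G) (gactC g π) (ν.map g) = g '' (T G π ν))
    (φ : SimpleGraph (Fin n) → (Fin n → ℕ) → List (Fin n) → Ω)
    (hφ1 : ∀ (G : SimpleGraph (Fin n)) (π₀ : Fin n → ℕ) (ν ν' : List (Fin n)),
      IsTNode (T G π₀) ν → IsTNode (T G π₀) ν' → ν ≠ ν' → ν.length = ν'.length →
      φ G π₀ ν < φ G π₀ ν' →
      ∀ ν₁ ν₁', IsTNode (T G π₀) ν₁ → ν <+: ν₁ → Function.Injective (R G π₀ ν₁) →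
        IsTNode (T G π₀) ν₁' → ν' <+: ν₁' → Function.Injective (R G π₀ ν₁') →
        φ G π₀ ν₁ < φ G π₀ ν₁')
    (hφ2 : ∀ (G : SimpleGraph (Fin n)) (π₀ : Fin n → ℕ) (ν ν' : List (Fin n)),
      IsTNode (T G π₀) ν → IsTNode (T G π₀) ν' →
      Function.Injective (R G π₀ ν) → Function.Injective (R G π₀ ν') →
      (φ G π₀ ν = φ G π₀ ν' ↔ relabelSet G (R G π₀ ν) = relabelSet G (R G π₀ ν')))
    (hφ3 : ∀ (G : SimpleGraph (Fin n)) (π₀ : Fin n → ℕ) (ν : List (Fin n))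
      (g : Equiv.Perm (Fin n)), φ (gactG g G) (gactC g π₀) (ν.map g) = φ G π₀ ν)
    (hRcol : ∀ G π ν, IsCol (R G π ν))
    (G : SimpleGraph (Fin n)) (π₀ : Fin n → ℕ) (hπ₀ : IsCol π₀)
    (ν : List (Fin n)) (hν : IsTNode (T G π₀) ν)
    (hd : Function.Injective (R G π₀ ν)) :
    ∀ g : Equiv.Perm (Fin n),
      (gactG g G = G ∧ gactC g π₀ = π₀) ↔
      ∃ ν' : List (Fin n), IsTNode (T G π₀) ν' ∧ Function.Injective (R G π₀ ν') ∧
        φ G π₀ ν' = φ G π₀ ν ∧ ∀ v, R G π₀ ν' (g v) = R G π₀ ν v :=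
  stmt11_general R T hR1 hR3 hT3 φ hφ2 hφ3 hRcol G π₀ ν hν hd
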